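/- Let l, l', x0, x0', x1, x1' be finite sets and g0 : l → x0, f1 : l → x1, g0' : l' → x0', f1' : l' → x1' functions. Form the sum maps g0 ⊔ g0' : l ⊔ l' → x0 ⊔ x0' and f1 ⊔ f1' : l ⊔ l' → x1 ⊔ x1'. Call a pair (U, V) with U ⊆ x0 ⊔ x0', V ⊆ x1 ⊔ x1' a synchronisation if (g0 ⊔ g0')⁻¹(U) = (f1 ⊔ f1')⁻¹(V), minimal if it is nontrivial and every synchronisation contained in it componentwise is trivial or equal to it. Then (U, V) is a minimal synchronisation of the sum maps if and only if either U and V lie entirely in the left summands and their left components form a minimal synchronisation of (g0, f1), or U and V lie entirely in the right summands and their right components form a minimal synchronisation of (g0', f1'). -/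

import Mathlib

/-- `(U, V)` is a synchronisation for `g : l → x0`, `f : l → x1`:
the preimages agree. -/
def FSync {l x0 x1 : Type*} (g : l → x0) (f : l → x1)
    (U : Set x0) (V : Set x1) : Prop :=
  g ⁻¹' U = f ⁻¹' V

/-- Minimal synchronisation: nontrivial, and every synchronisation
contained componentwise in it is trivial or equal to it. -/
def FMinSync {l x0 x1 : Type*} (g : l → x0) (f : l → x1)
    (U : Set x0) (V : Set x1) : Prop :=
  FSync g f U V ∧ ¬(U = ∅ ∧ V = ∅) ∧
    ∀ U' V', FSync g f U' V' → U' ⊆ U → V' ⊆ V →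
      (U' = ∅ ∧ V' = ∅) ∨ (U' = U ∧ V' = V)

section Aux

variable {l l' x0 x0' x1 x1' : Type*}
  (g0 : l → x0) (f1 : l → x1) (g0' : l' → x0') (f1' : l' → x1')

lemma fsync_sum_iff (U : Set (x0 ⊕ x0')) (V : Set (x1 ⊕ x1')) :
    FSync (Sum.map g0 g0') (Sum.map f1 f1') U V ↔
      FSync g0 f1 (Sum.inl ⁻¹' U) (Sum.inl ⁻¹' V) ∧
      FSync g0' f1' (Sum.inr ⁻¹' U) (Sum.inr ⁻¹' V) := by
  unfold FSync
  constructor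
  · intro h
    constructor <;> ext a
    · exact Set.ext_iff.mp h (Sum.inl a)
    · exact Set.ext_iff.mp h (Sum.inr a)
  · rintro ⟨h1, h2⟩
    ext a
    cases a with
    | inl a => exact Set.ext_iff.mp h1 a
    | inr a => exact Set.ext_iff.mp h2 a

lemma fsync_inl (U₀ : Set x0) (V₀ : Set x1) (h : FSync g0 f1 U₀ V₀) :
    FSync (Sum.map g0 g0') (Sum.map f1 f1') (Sum.inl '' U₀) (Sum.inl '' V₀) := by
  rw [fsync_sum_iff]
  refine ⟨?_, ?_⟩
  · simpa [FSync, Set.preimage_image_eq _ Sum.inl_injective] using h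
  · simp [FSync, Set.preimage_inr_image_inl]

lemma fsync_inr (U₀ : Set x0') (V₀ : Set x1') (h : FSync g0' f1' U₀ V₀) :
    FSync (Sum.map g0 g0') (Sum.map f1 f1') (Sum.inr '' U₀) (Sum.inr '' V₀) := by
  rw [fsync_sum_iff]
  refine ⟨?_, ?_⟩
  · simp [FSync, Set.preimage_inl_image_inr]
  · simpa [FSync, Set.preimage_image_eq _ Sum.inr_injective] using h

lemma fminsync_inl (U₀ : Set x0) (V₀ : Set x1) (h : FMinSync g0 f1 U₀ V₀) :
    FMinSync (Sum.map g0 g0') (Sum.map f1 f1') (Sum.inl '' U₀) (Sum.inl '' V₀) := by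
  obtain ⟨hs, hnt, hmin⟩ := h
  refine ⟨fsync_inl _ _ _ _ _ _ hs, ?_, ?_⟩
  · rintro ⟨hU, hV⟩
    exact hnt ⟨Set.image_eq_empty.mp hU, Set.image_eq_empty.mp hV⟩
  · intro U' V' hs' hU' hV'
    have hUeq : U' = Sum.inl '' (Sum.inl ⁻¹' U') := by
      have : U' ⊆ Set.range (Sum.inl : x0 → x0 ⊕ x0') :=
        hU'.trans (Set.image_subset_range _ _)
      rw [Set.image_preimage_eq_iff.mpr this]
    have hVeq : V' = Sum.inl '' (Sum.inl ⁻¹' V') := by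
      have : V' ⊆ Set.range (Sum.inl : x1 → x1 ⊕ x1') :=
        hV'.trans (Set.image_subset_range _ _)
      rw [Set.image_preimage_eq_iff.mpr this]
    have hcomp := (fsync_sum_iff g0 f1 g0' f1' U' V').mp hs'
    have h1 : Sum.inl ⁻¹' U' ⊆ U₀ := by
      intro a ha
      obtain ⟨b, hb, hb'⟩ := hU' ha
      rwa [Sum.inl_injective hb'] at hb
    have h2 : Sum.inl ⁻¹' V' ⊆ V₀ := by
      intro a ha
      obtain ⟨b, hb, hb'⟩ := hV' ha
      rwa [Sum.inl_injective hb'] at hb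
    rcases hmin _ _ hcomp.1 h1 h2 with ⟨e1, e2⟩ | ⟨e1, e2⟩
    · left
      rw [hUeq, hVeq, e1, e2]
      simp
    · right
      rw [hUeq, hVeq, e1, e2]
      exact ⟨rfl, rfl⟩

lemma fminsync_inr (U₀ : Set x0') (V₀ : Set x1') (h : FMinSync g0' f1' U₀ V₀) :
    FMinSync (Sum.map g0 g0') (Sum.map f1 f1') (Sum.inr '' U₀) (Sum.inr '' V₀) := by
  obtain ⟨hs, hnt, hmin⟩ := h
  refine ⟨fsync_inr _ _ _ _ _ _ hs, ?_, ?_⟩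
  · rintro ⟨hU, hV⟩
    exact hnt ⟨Set.image_eq_empty.mp hU, Set.image_eq_empty.mp hV⟩
  · intro U' V' hs' hU' hV'
    have hUeq : U' = Sum.inr '' (Sum.inr ⁻¹' U') := by
      have : U' ⊆ Set.range (Sum.inr : x0' → x0 ⊕ x0') :=
        hU'.trans (Set.image_subset_range _ _)
      rw [Set.image_preimage_eq_iff.mpr this]
    have hVeq : V' = Sum.inr '' (Sum.inr ⁻¹' V') := by
      have : V' ⊆ Set.range (Sum.inr : x1' → x1 ⊕ x1') :=
        hV'.trans (Set.image_subset_range _ _)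
      rw [Set.image_preimage_eq_iff.mpr this]
    have hcomp := (fsync_sum_iff g0 f1 g0' f1' U' V').mp hs'
    have h1 : Sum.inr ⁻¹' U' ⊆ U₀ := by
      intro a ha
      obtain ⟨b, hb, hb'⟩ := hU' ha
      rwa [Sum.inr_injective hb'] at hb
    have h2 : Sum.inr ⁻¹' V' ⊆ V₀ := by
      intro a ha
      obtain ⟨b, hb, hb'⟩ := hV' ha
      rwa [Sum.inr_injective hb'] at hb
    rcases hmin _ _ hcomp.2 h1 h2 with ⟨e1, e2⟩ | ⟨e1, e2⟩
    · left
      rw [hUeq, hVeq, e1, e2]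
      simp
    · right
      rw [hUeq, hVeq, e1, e2]
      exact ⟨rfl, rfl⟩

end Aux

/-- minimal synchronisations of a sum of cospans are exactly
the (left- or right-) injected minimal synchronisations of the summands. -/
theorem minimal_synchronisations_of_sum
    {l l' x0 x0' x1 x1' : Type*}
    [Finite l] [Finite l'] [Finite x0] [Finite x0']
    [Finite x1] [Finite x1']
    (g0 : l → x0) (f1 : l → x1) (g0' : l' → x0') (f1' : l' → x1')
    (U : Set (x0 ⊕ x0')) (V : Set (x1 ⊕ x1')) :
    FMinSync (Sum.map g0 g0') (Sum.map f1 f1') U V ↔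
      ((∃ U₀ V₀, FMinSync g0 f1 U₀ V₀ ∧
          U = Sum.inl '' U₀ ∧ V = Sum.inl '' V₀) ∨
       (∃ U₀' V₀', FMinSync g0' f1' U₀' V₀' ∧
          U = Sum.inr '' U₀' ∧ V = Sum.inr '' V₀')) := by
  constructor
  · rintro ⟨hs, hnt, hmin⟩
    obtain ⟨hsL, hsR⟩ := (fsync_sum_iff g0 f1 g0' f1' U V).mp hs
    have hdecU := Set.image_preimage_inl_union_image_preimage_inr U
    have hdecV := Set.image_preimage_inl_union_image_preimage_inr V
    have hleft := hmin (Sum.inl '' (Sum.inl ⁻¹' U)) (Sum.inl '' (Sum.inl ⁻¹' V))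
      (fsync_inl g0 f1 g0' f1' _ _ hsL)
      (Set.image_preimage_subset _ _) (Set.image_preimage_subset _ _)
    have hright := hmin (Sum.inr '' (Sum.inr ⁻¹' U)) (Sum.inr '' (Sum.inr ⁻¹' V))
      (fsync_inr g0 f1 g0' f1' _ _ hsR)
      (Set.image_preimage_subset _ _) (Set.image_preimage_subset _ _)
    rcases hleft with ⟨eU, eV⟩ | ⟨eU, eV⟩
    · -- left part trivial; right part must be everything
      rcases hright with ⟨eU', eV'⟩ | ⟨eU', eV'⟩
      · exfalso
        apply hnt
        constructor
        · rw [← hdecU, eU, eU']; simp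
        · rw [← hdecV, eV, eV']; simp
      · right
        refine ⟨(Sum.inr ⁻¹' U), (Sum.inr ⁻¹' V), ?_, eU'.symm, eV'.symm⟩
        refine ⟨hsR, ?_, ?_⟩
        · rintro ⟨h1, h2⟩
          apply hnt
          constructor
          · rw [← hdecU, eU, h1]; simp
          · rw [← hdecV, eV, h2]; simp
        · intro U' V' hs' hU' hV'
          have := hmin (Sum.inr '' U') (Sum.inr '' V')
            (fsync_inr g0 f1 g0' f1' _ _ hs')
            ((Set.image_mono hU').trans (le_of_eq eU'))
            ((Set.image_mono hV').trans (le_of_eq eV'))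
          rcases this with ⟨h1, h2⟩ | ⟨h1, h2⟩
          · exact Or.inl ⟨Set.image_eq_empty.mp h1, Set.image_eq_empty.mp h2⟩
          · right
            rw [eU'.symm] at h1
            rw [eV'.symm] at h2
            exact ⟨Set.image_injective.mpr Sum.inr_injective h1,
              Set.image_injective.mpr Sum.inr_injective h2⟩
    · left
      refine ⟨(Sum.inl ⁻¹' U), (Sum.inl ⁻¹' V), ?_, eU.symm, eV.symm⟩
      refine ⟨hsL, ?_, ?_⟩
      · rintro ⟨h1, h2⟩
        apply hnt
        constructor
        · rw [← eU, h1]; simp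
        · rw [← eV, h2]; simp
      · intro U' V' hs' hU' hV'
        have := hmin (Sum.inl '' U') (Sum.inl '' V')
          (fsync_inl g0 f1 g0' f1' _ _ hs')
          ((Set.image_mono hU').trans (le_of_eq eU))
          ((Set.image_mono hV').trans (le_of_eq eV))
        rcases this with ⟨h1, h2⟩ | ⟨h1, h2⟩
        · exact Or.inl ⟨Set.image_eq_empty.mp h1, Set.image_eq_empty.mp h2⟩
        · right
          rw [eU.symm] at h1
          rw [eV.symm] at h2
          exact ⟨Set.image_injective.mpr Sum.inl_injective h1,
            Set.image_injective.mpr Sum.inl_injective h2⟩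
  · rintro (⟨U₀, V₀, h, rfl, rfl⟩ | ⟨U₀', V₀', h, rfl, rfl⟩)
    · exact fminsync_inl g0 f1 g0' f1' _ _ h
    · exact fminsync_inr g0 f1 g0' f1' _ _ h
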